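/- Let C be a pure normal simplicial complex of dimension d−1, let S be a nonempty set of vertices of C, and let Γ=[F_0,…,F_N] be a dual path in C in which F_N is the only facet intersecting S. Then Γ is a combinatorial segment from F_0 to S (for some anchor x_0∈F_0) if and only if the facets of Γ can be equipped with vertex orderings (namely, the implicit orderings of the combinatorial segment) making Γ monotone and conservative towards S. -/

import Mathlib

/-! Common definitions: pure simplicial complexes (represented by their facet sets),
vertex-distance, links, ordered facets, vectors of distances, admissibility, and
monotone/conservative dual paths, following Adiprasito–Benedetti's combinatorial
segments. -/

open scoped Classical

noncomputable section

namespace MCP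

variable {V : Type} [DecidableEq V] [Fintype V]

/-- The vertex set of the complex whose set of facets is `C`. -/
def verts (C : Finset (Finset V)) : Finset V := C.sup id

/-- `f` is a face of the pure complex with facet set `C`. -/
def IsFace (C : Finset (Finset V)) (f : Finset V) : Prop := ∃ F ∈ C, f ⊆ F

/-- `C` is pure of dimension `d - 1`: every facet has `d` vertices. -/
def Pure (C : Finset (Finset V)) (d : ℕ) : Prop := ∀ F ∈ C, F.card = d

/-- The 1-skeleton of the complex: two vertices are joined iff they lie in a common facet. -/
def skeleton (C : Finset (Finset V)) : SimpleGraph V where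
  Adj u v := u ≠ v ∧ ∃ F ∈ C, u ∈ F ∧ v ∈ F
  symm := by
    constructor
    rintro u v ⟨h, F, hF, hu, hv⟩
    exact ⟨h.symm, F, hF, hv, hu⟩
  loopless := by constructor; rintro u ⟨h, -⟩; exact h rfl

/-- Two facets are adjacent in the dual graph iff they differ in a single vertex. -/
def AdjFacets (F G : Finset V) : Prop :=
  F ≠ G ∧ F.card = G.card ∧ (F ∩ G).card + 1 = F.card

/-- A dual path: a list of facets of `C` in which consecutive facets are adjacent. -/
def IsDualPath (C : Finset (Finset V)) (P : List (Finset V)) : Prop :=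
  (∀ F ∈ P, F ∈ C) ∧ P.Chain' AdjFacets

/-- `C` is normal: for every face `f`, any two facets containing `f` are joined by a
dual path all of whose facets contain `f`. -/
def Normal (C : Finset (Finset V)) : Prop :=
  ∀ f : Finset V, ∀ F ∈ C, ∀ G ∈ C, f ⊆ F → f ⊆ G →
    ∃ P : List (Finset V), P.head? = some F ∧ P.getLast? = some G ∧
      (∀ H ∈ P, H ∈ C ∧ f ⊆ H) ∧ P.Chain' AdjFacets

/-- The (facet set of the) link of a vertex `x` in `C`. -/
def link (C : Finset (Finset V)) (x : V) : Finset (Finset V) :=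
  (C.filter (fun F => x ∈ F)).image (fun F => F.erase x)

/-- Vertex-distance (in the 1-skeleton) between two sets of vertices, with value `⊤`
if one of the sets is empty, and with the special `0/1` convention when the complex
is `0`-dimensional. -/
def vdistSets (C : Finset (Finset V)) (S T : Finset V) : ℕ∞ :=
  if C.sup Finset.card ≤ 1 then
    (if S.Nonempty ∧ T.Nonempty then (if (S ∩ T).Nonempty then 0 else 1) else ⊤)
  else ⨅ u ∈ S, ⨅ v ∈ T, (skeleton C).edist u v

/-- The derived target set `S'` in the link of `x`, used in the recursive definitions
of the vector of distances and of admissibility. -/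
def targetSet (C : Finset (Finset V)) (x : V) (S : Finset V) : Finset V :=
  if x ∈ S then S ∩ verts (link C x)
  else (verts (link C x)).filter
    (fun w => vdistSets C {w} S + 1 = vdistSets C {x} S)

/-- The vector of distances from an ordered facet (a list of vertices) to a target set. -/
def distVector : Finset (Finset V) → List V → Finset V → List ℕ∞
  | _, [], _ => []
  | C, x :: rest, S => vdistSets C {x} S :: distVector (link C x) rest (targetSet C x S)

/-- Admissibility of an ordering of a facet with respect to a target set: the first
vertex realizes the vertex-distance from the facet to the target set, and recursively
in the link. -/
def Admissible : Finset (Finset V) → List V → Finset V → Prop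
  | _, [], _ => True
  | C, x :: rest, S =>
      vdistSets C {x} S = vdistSets C (x :: rest).toFinset S ∧
      Admissible (link C x) rest (targetSet C x S)

/-- An ordered facet of `C`: a repetition-free list of vertices forming a facet. -/
def IsOrderedFacet (C : Finset (Finset V)) (L : List V) : Prop :=
  L.Nodup ∧ L.toFinset ∈ C

/-- A dual path of ordered facets. -/
def IsOrderedDualPath (C : Finset (Finset V)) (Γ : List (List V)) : Prop :=
  (∀ L ∈ Γ, IsOrderedFacet C L) ∧
  Γ.Chain' (fun L M => AdjFacets L.toFinset M.toFinset)

/-- A path of ordered facets is monotone towards `S` if its vectors of distances are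
strictly lexicographically decreasing. -/
def MonotonePath (C : Finset (Finset V)) (S : Finset V) (Γ : List (List V)) : Prop :=
  Γ.Chain' (fun L M => List.Lex (· < ·) (distVector C M S) (distVector C L S))

/-- The index of a step: the least position at which the two orderings differ. -/
def stepIndex (L M : List V) : ℕ := sInf {k : ℕ | L[k]? ≠ M[k]?}

/-- The step from `L` to `M` is conservative towards `S`: the removed vertex is the last
vertex of `L`, and `M` is admissibly ordered with maximum index among all admissible
reorderings. -/
def ConservativeStep (C : Finset (Finset V)) (S : Finset V) (L M : List V) : Prop :=
  (∃ x, L.getLast? = some x ∧ L.toFinset \ M.toFinset = {x}) ∧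
  Admissible C M S ∧
  ∀ M' : List V, M'.Perm M → Admissible C M' S → stepIndex L M' ≤ stepIndex L M

/-- A path of ordered facets is conservative towards `S` if its first facet is
admissibly ordered and every step is conservative. -/
def ConservativePath (C : Finset (Finset V)) (S : Finset V) (Γ : List (List V)) : Prop :=
  (∀ L ∈ Γ.head?, Admissible C L S) ∧ Γ.Chain' (ConservativeStep C S)

/-- A monotone conservative dual path of ordered facets towards `S`. -/
def MonoConsPath (C : Finset (Finset V)) (S : Finset V) (Γ : List (List V)) : Prop :=
  IsOrderedDualPath C Γ ∧ MonotonePath C S Γ ∧ ConservativePath C S Γ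

/-- The path `Γ` starts at the facet `F`. -/
def StartsAt (Γ : List (List V)) (F : Finset V) : Prop :=
  ∃ L, Γ.head? = some L ∧ L.toFinset = F

/-- The path `Γ` ends at the facet `F`. -/
def EndsAt (Γ : List (List V)) (F : Finset V) : Prop :=
  ∃ L, Γ.getLast? = some L ∧ L.toFinset = F

/-- `C` is flag: every set of vertices of `C` pairwise joined by edges of `C` is a face. -/
def Flag (C : Finset (Finset V)) : Prop :=
  ∀ T : Finset V, T ⊆ verts C →
    (∀ u ∈ T, ∀ v ∈ T, u ≠ v → (skeleton C).Adj u v) → IsFace C T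

/-- A critical clique: a clique of the 1-skeleton that becomes a face after removing a
suitable vertex. -/
def CriticalClique (C : Finset (Finset V)) (T : Finset V) : Prop :=
  (∀ u ∈ T, ∀ v ∈ T, u ≠ v → (skeleton C).Adj u v) ∧ ∃ v ∈ T, IsFace C (T.erase v)

/-- `C` is `k`-banner: every critical clique with at least `k + 1` vertices is a face. -/
def Banner (C : Finset (Finset V)) (k : ℕ) : Prop :=
  ∀ T : Finset V, CriticalClique C T → k + 1 ≤ T.card → IsFace C T

/-- A pure `(d-1)`-complex is a pseudomanifold (possibly with boundary) if every
`(d-2)`-dimensional face lies in at most two facets. -/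
def Pseudomanifold (C : Finset (Finset V)) (d : ℕ) : Prop :=
  ∀ f : Finset V, f.card + 1 = d → IsFace C f → (C.filter (fun F => f ⊆ F)).card ≤ 2

/-- A pure `(d-1)`-complex is a pseudomanifold without boundary if every
`(d-2)`-dimensional face lies in exactly two facets. -/
def PseudomanifoldNoBoundary (C : Finset (Finset V)) (d : ℕ) : Prop :=
  ∀ f : Finset V, f.card + 1 = d → IsFace C f → (C.filter (fun F => f ⊆ F)).card = 2

/-- The join of two complexes (given by their facet sets, on disjoint vertex sets). -/
def join (C₁ C₂ : Finset (Finset V)) : Finset (Finset V) :=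
  (C₁ ×ˢ C₂).image (fun p => p.1 ∪ p.2)

/-- The one-point-suspension of `C` at the vertex `v`; the two new suspension vertices
are `Sum.inr false` and `Sum.inr true`. -/
def ops (C : Finset (Finset V)) (v : V) : Finset (Finset (V ⊕ Bool)) :=
  ((C.filter (fun F => v ∈ F)).image
      (fun F => ((F.erase v).image Sum.inl) ∪ {Sum.inr false, Sum.inr true}))
  ∪ ((C.filter (fun F => v ∉ F)).image (fun F => (F.image Sum.inl) ∪ {Sum.inr false}))
  ∪ ((C.filter (fun F => v ∉ F)).image (fun F => (F.image Sum.inl) ∪ {Sum.inr true}))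

/-- The degree of a vertex in the 1-skeleton of `C`. -/
def degree (C : Finset (Finset V)) (x : V) : ℕ :=
  (Finset.univ.filter fun w => (skeleton C).Adj x w).card

/-- Vertex-decomposability of a pure complex given by its facet set: either a single
simplex, or there is a vertex whose deletion stays pure of the same dimension and whose
link and deletion are both vertex-decomposable.  (The condition
`∀ F ∈ C, ∃ G ∈ C, x ∉ G ∧ F.erase x ⊆ G` expresses that the deletion of `x` is pure
of the same dimension, so that its facets are the facets of `C` avoiding `x`.) -/
inductive VertexDecomposable : Finset (Finset V) → Prop
  | simplex (F : Finset V) : VertexDecomposable {F}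
  | step (C : Finset (Finset V)) (x : V) (hx : x ∈ verts C)
      (hdelpure : ∀ F ∈ C, ∃ G ∈ C, x ∉ G ∧ F.erase x ⊆ G)
      (hlink : VertexDecomposable (link C x))
      (hdel : VertexDecomposable (C.filter (fun F => x ∉ F))) :
      VertexDecomposable C

/-- The maximum length (number of steps) of a monotone conservative path in `C`, over
all nonempty target sets of vertices of `C`. -/
def maxl (C : Finset (Finset V)) : ℕ :=
  sSup {n : ℕ | ∃ (S : Finset V) (Γ : List (List V)), S.Nonempty ∧ S ⊆ verts C ∧
    MonoConsPath C S Γ ∧ Γ.length = n + 1}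

/-- `CombSeg C Γ S x₀`: the dual path `Γ` is a combinatorial segment in `C` from its
first facet to the target set `S`, anchored at `x₀` (Adiprasito–Benedetti). -/
inductive CombSeg : Finset (Finset V) → List (Finset V) → Finset V → V → Prop
  | intersects (C : Finset (Finset V)) (F S : Finset V) (x₀ : V)
      (hF : F ∈ C) (hx : x₀ ∈ F) (hFS : (F ∩ S).Nonempty) :
      CombSeg C [F] S x₀
  | dimOne (C : Finset (Finset V)) (S : Finset V) (x₀ v : V)
      (hdim : ∀ F ∈ C, F.card = 1)
      (h₁ : {x₀} ∈ C) (h₂ : {v} ∈ C) (hx : x₀ ∉ S) (hv : v ∈ S) :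
      CombSeg C [{x₀}, {v}] S x₀
  | step (C : Finset (Finset V)) (F₀ : Finset V) (Γ₁ Γ₂ : List (Finset V))
      (Fk S : Finset V) (x₀ y x₀' : V) (ℓ : ℕ∞)
      (hdim : ∀ F ∈ C, 2 ≤ F.card)
      (hmem : ∀ F ∈ F₀ :: Γ₁, F ∈ C)
      (hdisj : ∀ F ∈ F₀ :: Γ₁, F ∩ S = ∅)
      (hℓ : vdistSets C F₀ S = ℓ)
      (hbefore : ∀ F ∈ F₀ :: Γ₁, ¬ vdistSets C F S < ℓ)
      (hafter : vdistSets C Fk S < ℓ)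
      (hy : y ∈ Fk)
      (hyd : vdistSets C {y} S + 1 = ℓ)
      (hyuniq : ∀ z ∈ Fk, vdistSets C {z} S + 1 = ℓ → z = y)
      (hx₀ : ∀ F ∈ F₀ :: Γ₁, x₀ ∈ F) (hx₀k : x₀ ∈ Fk)
      (hlink : CombSeg (link C x₀)
          (((F₀ :: Γ₁) ++ [Fk]).map (fun F => F.erase x₀))
          ((verts (link C x₀)).filter (fun w => vdistSets C {w} S + 1 = ℓ)) x₀')
      (htail : CombSeg C (Fk :: Γ₂) S y) :
      CombSeg C (F₀ :: Γ₁ ++ Fk :: Γ₂) S x₀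

end MCP

/-!
Both directions follow the recursion that defines combinatorial segments. While a segment runs
through facets that contain its anchor `x₀` and lie at distance `ℓ = vdist(x₀, S)`, putting `x₀`
in front of orderings identifies monotone conservative paths in `lk x₀` towards the derived target
set with monotone conservative paths in `C`: distance vectors acquire the common first entry `ℓ`
and step indices shift by one. The first facet `F_k` closer to `S` is entered by a step of index
`0`, since every admissible ordering of `F_k` starts at a vertex of distance `ℓ - 1`; so that step
is conservative for free, and the rest of the path is treated recursively from its anchor `y`.

Conversely, in a monotone conservative path the first vertex stays `x₀` as long as the distance
stays `ℓ`: the removed vertex is the last one, so `x₀` survives the step, some admissible ordering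
of the next facet starts with `x₀`, and maximality of the index forces the chosen ordering to start
with `x₀` as well. As consecutive facets differ in one vertex, the vertex `y` of `F_k` at distance
`ℓ - 1` is unique. In the link, the path is closed off by an admissible ordering of `F_k ∖ x₀` of
maximal index.
-/

namespace List

theorem exists_eq_append_cons_of_exists_not {α : Type*} {p : α → Prop} :
    ∀ {l : List α}, (∃ a ∈ l, ¬ p a) →
      ∃ P a R, l = P ++ a :: R ∧ (∀ b ∈ P, p b) ∧ ¬ p a
  | [], h => by simp at h
  | b :: l, h => by
    by_cases hb : p b
    · obtain ⟨P, a, R, rfl, hP, ha⟩ := exists_eq_append_cons_of_exists_not (p := p)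
        (l := l) (by simpa [hb] using h)
      exact ⟨b :: P, a, R, rfl, List.forall_mem_cons.2 ⟨hb, hP⟩, ha⟩
    · exact ⟨[], b, l, rfl, by simp, hb⟩

theorem map_cons_tail_eq {α : Type*} {x : α} {P : List (List α)}
    (h : ∀ L ∈ P, L.head? = some x) :
    (P.map List.tail).map (x :: ·) = P := by
  rw [List.map_map]
  refine (List.map_congr_left fun L hL => ?_).trans (List.map_id P)
  obtain _ | ⟨w, t⟩ := L
  · simpa using h _ hL
  · obtain rfl : w = x := by simpa using h _ hL
    rfl

end List

namespace MCP

variable {V : Type}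

/-! ### Vertex-distance -/

section Distance

variable [DecidableEq V] {C : Finset (Finset V)} {S T F : Finset V} {u v : V}

def pointDist (C : Finset (Finset V)) (u v : V) : ℕ∞ :=
  if C.sup Finset.card ≤ 1 then (if u = v then 0 else 1) else (skeleton C).edist u v

lemma pointDist_eq_zero_iff : pointDist C u v = 0 ↔ u = v := by
  unfold pointDist
  split_ifs <;> simp_all [SimpleGraph.edist_eq_zero_iff]

lemma vdistSets_eq_inf : vdistSets C T S = T.inf fun u => S.inf (pointDist C u) := by
  by_cases hdeg : C.sup Finset.card ≤ 1
  · have hpoint : ∀ a b, pointDist C a b = if a = b then 0 else 1 := fun a b => if_pos hdeg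
    simp only [vdistSets, if_pos hdeg]
    rcases T.eq_empty_or_nonempty with rfl | hT
    · simp
    rcases S.eq_empty_or_nonempty with rfl | hS
    · simp
    rw [if_pos ⟨hT, hS⟩]
    split_ifs with hTS
    · obtain ⟨w, hw⟩ := hTS
      rw [Finset.mem_inter] at hw
      exact le_antisymm zero_le
        (Finset.inf_le_of_le hw.1 (Finset.inf_le_of_le hw.2 (by simp [hpoint])))
    · obtain ⟨u, hu⟩ := hT
      obtain ⟨v, hv⟩ := hS
      refine le_antisymm (Finset.le_inf fun a ha => Finset.le_inf fun b hb => ?_)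
        (Finset.inf_le_of_le hu (Finset.inf_le_of_le hv (by rw [hpoint]; split_ifs <;> simp)))
      rw [hpoint, if_neg]
      rintro rfl
      exact hTS ⟨a, Finset.mem_inter.2 ⟨ha, hb⟩⟩
  · simp only [vdistSets, pointDist, if_neg hdeg, Finset.inf_eq_iInf]

lemma vdistSets_singleton : vdistSets C {u} S = S.inf (pointDist C u) := by
  rw [vdistSets_eq_inf, Finset.inf_singleton]

lemma vdistSets_le_singleton (hu : u ∈ T) : vdistSets C T S ≤ vdistSets C {u} S := by
  rw [vdistSets_eq_inf, vdistSets_singleton]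
  exact Finset.inf_le (f := fun u => S.inf (pointDist C u)) hu

lemma exists_vdistSets_singleton_eq (hT : T.Nonempty) :
    ∃ u ∈ T, vdistSets C {u} S = vdistSets C T S := by
  obtain ⟨u, hu, h⟩ := T.exists_mem_eq_inf hT fun u => S.inf (pointDist C u)
  exact ⟨u, hu, by rw [vdistSets_singleton, vdistSets_eq_inf, h]⟩

lemma vdistSets_eq_zero_iff : vdistSets C T S = 0 ↔ (T ∩ S).Nonempty := by
  simp only [vdistSets_eq_inf, ← bot_eq_zero, Finset.inf_eq_bot_iff]
  simp only [bot_eq_zero, pointDist_eq_zero_iff]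
  constructor
  · rintro ⟨u, hu, v, hv, rfl⟩
    exact ⟨u, Finset.mem_inter.2 ⟨hu, hv⟩⟩
  · rintro ⟨u, hu⟩
    exact ⟨u, (Finset.mem_inter.1 hu).1, u, (Finset.mem_inter.1 hu).2, rfl⟩

lemma vdistSets_singleton_eq_zero_iff : vdistSets C {u} S = 0 ↔ u ∈ S := by
  simp [vdistSets_eq_zero_iff, Finset.Nonempty]

lemma vdistSets_singleton_le_one (hdeg : C.sup Finset.card ≤ 1) (hS : S.Nonempty) :
    vdistSets C {u} S ≤ 1 := by
  obtain ⟨v, hv⟩ := hS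
  rw [vdistSets_singleton]
  refine Finset.inf_le_of_le hv ?_
  unfold pointDist
  split_ifs <;> simp

lemma vdistSets_singleton_le_add_one (hF : F ∈ C) (hu : u ∈ F) (hv : v ∈ F) :
    vdistSets C {u} S ≤ vdistSets C {v} S + 1 := by
  rcases eq_or_ne u v with rfl | huv
  · exact le_self_add
  have hndeg : ¬ C.sup Finset.card ≤ 1 := fun h =>
    (Finset.one_lt_card.2 ⟨u, hu, v, hv, huv⟩).not_ge ((Finset.le_sup hF).trans h)
  have hadj : (skeleton C).Adj u v := ⟨huv, F, hF, hu, hv⟩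
  have hpoint : ∀ w, pointDist C u w ≤ pointDist C v w + 1 := fun w => by
    rw [pointDist, pointDist, if_neg hndeg, if_neg hndeg]
    calc (skeleton C).edist u w ≤ (skeleton C).edist u v + (skeleton C).edist v w :=
          SimpleGraph.edist_triangle
      _ = (skeleton C).edist v w + 1 := by
          rw [SimpleGraph.edist_eq_one_iff_adj.2 hadj, add_comm]
  rw [vdistSets_singleton, vdistSets_singleton]
  rcases S.eq_empty_or_nonempty with rfl | hS
  · simp
  obtain ⟨w, hw, hmin⟩ := S.exists_mem_eq_inf hS (pointDist C v)
  rw [hmin]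
  exact Finset.inf_le_of_le hw (hpoint w)

lemma vdistSets_singleton_le_vdistSets_add_one (hF : F ∈ C) (hu : u ∈ F) :
    vdistSets C {u} S ≤ vdistSets C F S + 1 := by
  obtain ⟨v, hv, hveq⟩ := exists_vdistSets_singleton_eq (C := C) (S := S) ⟨u, hu⟩
  rw [← hveq]
  exact vdistSets_singleton_le_add_one hF hu hv

lemma vdistSets_singleton_add_one_ne (hu : u ∈ F) (hfin : vdistSets C F S ≠ ⊤) :
    vdistSets C {u} S + 1 ≠ vdistSets C F S := by
  intro h
  have hufin : vdistSets C {u} S ≠ ⊤ := fun hu => hfin (by rw [← h, hu, top_add])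
  have hle := vdistSets_le_singleton (C := C) (S := S) hu
  rw [← h, ENat.add_one_le_iff hufin] at hle
  exact hle.false

lemma vdistSets_ne_top_of_add_one_eq (hF : F ∈ C) (hu : u ∈ F)
    (hlt : vdistSets C F S < vdistSets C T S) (hu' : vdistSets C {u} S + 1 = vdistSets C T S) :
    vdistSets C T S ≠ ⊤ :=
  hu' ▸ WithTop.add_ne_top.2 ⟨ne_top_of_le_ne_top
    (WithTop.add_ne_top.2 ⟨hlt.ne_top, ENat.one_ne_top⟩)
    (vdistSets_singleton_le_vdistSets_add_one hF hu), ENat.one_ne_top⟩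

end Distance

section Link

variable [DecidableEq V] {C : Finset (Finset V)} {S F G : Finset V} {x y : V} {d : ℕ}

lemma mem_link : G ∈ link C x ↔ ∃ F ∈ C, x ∈ F ∧ F.erase x = G := by
  simp [link, and_assoc]

lemma erase_mem_link (hF : F ∈ C) (hx : x ∈ F) : F.erase x ∈ link C x :=
  mem_link.2 ⟨F, hF, hx, rfl⟩

lemma Pure.link (h : Pure C d) (x : V) : Pure (link C x) (d - 1) := by
  intro G hG
  obtain ⟨F, hF, hx, rfl⟩ := mem_link.1 hG
  rw [Finset.card_erase_of_mem hx, h F hF]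

lemma mem_verts_link (hF : F ∈ C) (hx : x ∈ F) (hy : y ∈ F) (hyx : y ≠ x) :
    y ∈ verts (link C x) :=
  Finset.mem_sup.2 ⟨F.erase x, erase_mem_link hF hx, Finset.mem_erase.2 ⟨hyx, hy⟩⟩

lemma AdjFacets.symm (h : AdjFacets F G) : AdjFacets G F := by
  obtain ⟨hne, hcard, hint⟩ := h
  exact ⟨hne.symm, hcard.symm, by rwa [Finset.inter_comm, ← hcard]⟩

lemma AdjFacets.card_sdiff (h : AdjFacets F G) : (F \ G).card = 1 := by
  have := Finset.card_inter_add_card_sdiff F G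
  have := h.2.2
  omega

lemma AdjFacets.erase (h : AdjFacets F G) (hxF : x ∈ F) (hxG : x ∈ G) :
    AdjFacets (F.erase x) (G.erase x) := by
  obtain ⟨hne, hcard, hint⟩ := h
  have hxFG : x ∈ F ∩ G := Finset.mem_inter.2 ⟨hxF, hxG⟩
  refine ⟨fun he => hne ?_, ?_, ?_⟩
  · rw [← Finset.insert_erase hxF, ← Finset.insert_erase hxG, he]
  · rw [Finset.card_erase_of_mem hxF, Finset.card_erase_of_mem hxG, hcard]
  · rw [Finset.erase_inter, Finset.inter_erase, Finset.erase_idem, Finset.card_erase_of_mem hxFG,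
      Finset.card_erase_of_mem hxF]
    have := Finset.card_pos.2 ⟨x, hxFG⟩
    omega

lemma targetSet_eq_filter (hx : x ∉ S) {ℓ : ℕ∞} (hℓ : vdistSets C {x} S = ℓ) :
    targetSet C x S = (verts (link C x)).filter fun w => vdistSets C {w} S + 1 = ℓ := by
  rw [targetSet, if_neg hx, hℓ]

lemma erase_inter_targetSet_eq_empty (hx : x ∉ S) (hfin : vdistSets C {x} S ≠ ⊤)
    (hF : vdistSets C F S = vdistSets C {x} S) : F.erase x ∩ targetSet C x S = ∅ := by
  rw [targetSet_eq_filter hx rfl, Finset.eq_empty_iff_forall_notMem]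
  intro w hw
  simp only [Finset.mem_inter, Finset.mem_erase, Finset.mem_filter] at hw
  exact vdistSets_singleton_add_one_ne hw.1.2 (hF ▸ hfin) (hw.2.2.trans hF.symm)

lemma mem_targetSet (hx : x ∉ S) (hF : F ∈ C) (hxF : x ∈ F) (hyF : y ∈ F) (hyx : y ≠ x)
    (hy : vdistSets C {y} S + 1 = vdistSets C {x} S) : y ∈ targetSet C x S := by
  rw [targetSet_eq_filter hx rfl]
  exact Finset.mem_filter.2 ⟨mem_verts_link hF hxF hyF hyx, hy⟩

end Link

/-! ### Admissible orderings and the step index -/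

section StepIndex

variable {a b : V} {L M l m : List V}

lemma stepIndex_eq_zero (h : L[0]? ≠ M[0]?) : stepIndex L M = 0 :=
  Nat.sInf_eq_zero.2 (Or.inl h)

lemma stepIndex_cons_of_ne (h : a ≠ b) : stepIndex (a :: l) (b :: m) = 0 :=
  stepIndex_eq_zero (by simpa using h)

lemma stepIndex_cons_cons (h : l ≠ m) : stepIndex (a :: l) (a :: m) = stepIndex l m + 1 := by
  obtain ⟨k, hk⟩ : ∃ k, l[k]? ≠ m[k]? := by
    by_contra! hc
    exact h (List.ext_getElem? hc)
  have hpos : 1 ≤ sInf {k | (a :: l)[k]? ≠ (a :: m)[k]?} := by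
    refine Nat.one_le_iff_ne_zero.2 fun h0 => ?_
    rcases Nat.sInf_eq_zero.1 h0 with h0 | h0
    · exact h0 rfl
    · exact (Set.eq_empty_iff_forall_notMem.1 h0) (k + 1) (by simpa using hk)
  rw [stepIndex, stepIndex, ← Nat.sInf_add hpos]
  simp

lemma head?_eq_of_stepIndex_ne_zero (h : stepIndex (a :: l) M ≠ 0) : M.head? = some a := by
  by_contra hM
  refine h (stepIndex_eq_zero fun h0 => hM ?_)
  rw [List.head?_eq_getElem?, ← h0]
  rfl

end StepIndex

section Admissible

variable [DecidableEq V] {C : Finset (Finset V)} {S F : Finset V} {x u : V}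

lemma admissible_cons_iff {l : List V}
    (hx : vdistSets C {x} S = vdistSets C (x :: l).toFinset S) :
    Admissible C (x :: l) S ↔ Admissible (link C x) l (targetSet C x S) :=
  ⟨And.right, And.intro hx⟩

lemma Admissible.vdistSets_head {l : List V} (h : Admissible C (x :: l) S) :
    vdistSets C {x} S = vdistSets C (x :: l).toFinset S :=
  h.1

lemma admissible_singleton (u : V) : Admissible C [u] S :=
  ⟨by simp, trivial⟩

lemma exists_admissible (F : Finset V) (C : Finset (Finset V)) (S : Finset V) :
    ∃ l : List V, l.Nodup ∧ l.toFinset = F ∧ Admissible C l S := by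
  induction h : F.card generalizing F C S with
  | zero => exact ⟨[], by simp_all [Admissible]⟩
  | succ n ih =>
    obtain ⟨u, hu, hmin⟩ :=
      exists_vdistSets_singleton_eq (C := C) (S := S) (T := F) (Finset.card_pos.1 (by omega))
    obtain ⟨l, hnd, hl, hadm⟩ := ih (F.erase u) (link C u) (targetSet C u S)
      (by rw [Finset.card_erase_of_mem hu, h, Nat.add_sub_cancel])
    have hul : (u :: l).toFinset = F := by rw [List.toFinset_cons, hl, Finset.insert_erase hu]
    refine ⟨u :: l, List.nodup_cons.2 ⟨fun h => ?_, hnd⟩, hul, by rw [hul, hmin], hadm⟩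
    simpa [hl] using List.mem_toFinset.2 h

lemma exists_admissible_cons (hu : u ∈ F) (hmin : vdistSets C {u} S = vdistSets C F S) :
    ∃ l : List V, (u :: l).Nodup ∧ (u :: l).toFinset = F ∧ Admissible C (u :: l) S := by
  obtain ⟨l, hnd, hl, hadm⟩ := exists_admissible (F.erase u) (link C u) (targetSet C u S)
  have hul : (u :: l).toFinset = F := by rw [List.toFinset_cons, hl, Finset.insert_erase hu]
  refine ⟨l, List.nodup_cons.2 ⟨fun h => ?_, hnd⟩, hul, by rw [hul, hmin], hadm⟩
  simpa [hl] using List.mem_toFinset.2 h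

lemma exists_perm_admissible_max_stepIndex (L l₀ : List V) (hadm : Admissible C l₀ S) :
    ∃ m : List V, m.Perm l₀ ∧ Admissible C m S ∧
      ∀ m', m'.Perm m → Admissible C m' S → stepIndex L m' ≤ stepIndex L m := by
  have hP : ∀ m, m ∈ (l₀.permutations.filter fun m => Admissible C m S).toFinset ↔
      m.Perm l₀ ∧ Admissible C m S := by
    simp
  obtain ⟨m, hm, hmax⟩ := Finset.exists_max_image _ (stepIndex L)
    ⟨l₀, (hP l₀).2 ⟨List.Perm.refl l₀, hadm⟩⟩
  exact ⟨m, ((hP m).1 hm).1, ((hP m).1 hm).2,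
    fun m' h h' => hmax m' ((hP m').2 ⟨h.trans ((hP m).1 hm).1, h'⟩)⟩

end Admissible

section ConservativeStep

variable [DecidableEq V] {C : Finset (Finset V)} {S : Finset V} {x y : V} {a b l M : List V}

lemma ne_of_sdiff_eq_singleton {r : V} (h : a.toFinset \ b.toFinset = {r}) :
    a.toFinset ≠ b.toFinset := by
  intro hab
  rw [hab, Finset.sdiff_self] at h
  exact Finset.singleton_ne_empty r h.symm

lemma conservativeStep_cons_cons_iff (hx : x ∉ a)
    (hd : vdistSets C {x} S = vdistSets C (x :: b).toFinset S) :
    ConservativeStep C S (x :: a) (x :: b) ↔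
      ConservativeStep (link C x) (targetSet C x S) a b := by
  have hsdiff : (x :: a).toFinset \ (x :: b).toFinset = a.toFinset \ b.toFinset := by
    rw [List.toFinset_cons, List.toFinset_cons, Finset.insert_sdiff_insert,
      Finset.sdiff_insert_of_notMem (by simpa using hx)]
  have hlast : (∃ r, (x :: a).getLast? = some r ∧ a.toFinset \ b.toFinset = {r}) ↔
      ∃ r, a.getLast? = some r ∧ a.toFinset \ b.toFinset = {r} := by
    cases a with
    | nil => simp
    | cons c a => rw [List.getLast?_cons_cons]
  have hperm : ∀ t : List V, t.Perm b → t.toFinset = b.toFinset :=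
    fun t ht => List.toFinset_eq_of_perm _ _ ht
  have hd' : ∀ t : List V, t.Perm b →
      vdistSets C {x} S = vdistSets C (x :: t).toFinset S := fun t ht => by
    rw [hd, List.toFinset_cons, List.toFinset_cons, hperm t ht]
  unfold ConservativeStep
  rw [hsdiff, hlast, admissible_cons_iff hd]
  refine and_congr_right fun hlast => and_congr_right fun _ => ?_
  obtain ⟨r, -, hr⟩ := hlast
  have hne : ∀ t : List V, t.Perm b → a ≠ t := fun t ht hat =>
    ne_of_sdiff_eq_singleton hr (by rw [hat, hperm t ht])
  constructor
  · intro hmax t ht hadm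
    have := hmax (x :: t) (ht.cons x) ((admissible_cons_iff (hd' t ht)).2 hadm)
    rwa [stepIndex_cons_cons (hne t ht), stepIndex_cons_cons (hne b (List.Perm.refl b)),
      Nat.add_le_add_iff_right] at this
  · intro hmax M' hM' hadm
    obtain _ | ⟨z, t⟩ := M'
    · exact absurd hM'.length_eq (by simp)
    rcases eq_or_ne z x with rfl | hzx
    · have ht := hM'.cons_inv
      rw [stepIndex_cons_cons (hne t ht), stepIndex_cons_cons (hne b (List.Perm.refl b))]
      exact Nat.add_le_add_right (hmax t ht ((admissible_cons_iff (hd' t ht)).1 hadm)) 1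
    · rw [stepIndex_cons_of_ne hzx.symm]
      exact Nat.zero_le _

lemma conservativeStep_of_vdistSets_lt
    (hlast : ∃ r, (x :: l).getLast? = some r ∧ (x :: l).toFinset \ M.toFinset = {r})
    (hM : Admissible C M S) (hlt : vdistSets C M.toFinset S < vdistSets C {x} S) :
    ConservativeStep C S (x :: l) M := by
  refine ⟨hlast, hM, fun M' hM' hadm => ?_⟩
  obtain _ | ⟨z, t⟩ := M'
  · rw [stepIndex_eq_zero (by simp)]
    exact Nat.zero_le _
  have hzx : z ≠ x := by
    rintro rfl
    rw [hadm.vdistSets_head, List.toFinset_eq_of_perm _ _ hM'] at hlt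
    exact hlt.false
  rw [stepIndex_cons_of_ne hzx.symm]
  exact Nat.zero_le _

lemma ConservativeStep.mem_of_head (h : ConservativeStep C S (x :: l) M) (hnd : (x :: l).Nodup)
    (hl : l ≠ []) : x ∈ M.toFinset := by
  obtain ⟨⟨r, hr, hrd⟩, -⟩ := h
  by_contra hxM
  have hx : x ∈ (x :: l).toFinset \ M.toFinset := by simp [hxM]
  rw [hrd, Finset.mem_singleton] at hx
  rw [List.getLast?_cons_of_ne_nil hl] at hr
  exact (List.nodup_cons.1 hnd).1 (hx ▸ List.mem_of_getLast? hr)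

lemma ConservativeStep.head?_eq (h : ConservativeStep C S (x :: l) M) (hnd : (x :: l).Nodup)
    (hl : l ≠ []) (hM : M.Nodup) (hdist : vdistSets C {x} S ≤ vdistSets C M.toFinset S) :
    M.head? = some x := by
  have hxM := h.mem_of_head hnd hl
  obtain ⟨t, htnd, ht, hadm⟩ :=
    exists_admissible_cons hxM (le_antisymm hdist (vdistSets_le_singleton hxM))
  have hlt : l ≠ t := by
    rintro rfl
    obtain ⟨⟨r, -, hr⟩, -⟩ := h
    exact ne_of_sdiff_eq_singleton hr ht
  refine head?_eq_of_stepIndex_ne_zero (l := l) ?_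
  have := h.2.2 (x :: t) (List.perm_of_nodup_nodup_toFinset_eq htnd hM ht) hadm
  rw [stepIndex_cons_cons hlt] at this
  omega

lemma ConservativeStep.vdistSets_add_one {l t : List V}
    (h : ConservativeStep C S (x :: l) (y :: t)) (hnd : (x :: l).Nodup) (hl : l ≠ [])
    (hM : (y :: t).toFinset ∈ C) (hlt : vdistSets C (y :: t).toFinset S < vdistSets C {x} S) :
    x ∈ (y :: t).toFinset ∧ vdistSets C {y} S + 1 = vdistSets C {x} S := by
  have hx := h.mem_of_head hnd hl
  rw [← h.2.1.vdistSets_head] at hlt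
  exact ⟨hx, le_antisymm (Order.add_one_le_of_lt hlt)
    (vdistSets_singleton_le_add_one hM hx (by simp))⟩

end ConservativeStep

section Path

variable [DecidableEq V] {C : Finset (Finset V)} {S : Finset V} {x : V} {Λ : List (List V)}
  {a b M : List V}

lemma ConservativePath.admissible {Γ' : List (List V)} (h : ConservativePath C S Γ') :
    ∀ L ∈ Γ', Admissible C L S := by
  induction Γ' with
  | nil => simp
  | cons L Γ' ih =>
    refine List.forall_mem_cons.2 ⟨h.1 L rfl, ih ⟨fun M hM => ?_, h.2.tail⟩⟩
    obtain _ | ⟨M', Γ''⟩ := Γ'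
    · simp at hM
    · exact (Option.mem_some_iff.1 hM) ▸ (List.isChain_cons_cons.1 h.2).1.2.1

lemma ConservativePath.left_of_append {A B : List (List V)}
    (h : ConservativePath C S (A ++ B)) : ConservativePath C S A := by
  refine ⟨fun L hL => h.1 L ?_, List.IsChain.left_of_append h.2⟩
  obtain _ | ⟨L', A⟩ := A
  · simp at hL
  · exact hL

lemma ConservativePath.append_singleton {A : List (List V)} {M : List V}
    (h : ConservativePath C S A) (hA : A ≠ [])
    (hstep : ∀ L ∈ A.getLast?, ConservativeStep C S L M) : ConservativePath C S (A ++ [M]) :=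
  ⟨by rw [List.head?_append_of_ne_nil _ hA]; exact h.1,
    List.IsChain.append h.2 (List.isChain_singleton M)
    fun L hL M' hM' => (Option.mem_some_iff.1 hM') ▸ hstep L hL⟩

lemma monotonePath_map_cons_iff :
    MonotonePath C S (Λ.map (x :: ·)) ↔ MonotonePath (link C x) (targetSet C x S) Λ :=
  (List.isChain_map _).trans
    (List.IsChain.iff fun a b => by simp only [distVector, List.lex_cons_iff])

lemma conservativePath_map_cons_iff
    (hΛ : ∀ a ∈ Λ, x ∉ a ∧ vdistSets C {x} S = vdistSets C (x :: a).toFinset S) :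
    ConservativePath C S (Λ.map (x :: ·)) ↔
      ConservativePath (link C x) (targetSet C x S) Λ := by
  have hchain : (Λ.map (x :: ·)).IsChain (ConservativeStep C S) ↔
      Λ.IsChain (ConservativeStep (link C x) (targetSet C x S)) := by
    rw [List.isChain_map]
    exact List.IsChain.iff_of_mem_imp fun a b ha hb =>
      conservativeStep_cons_cons_iff (hΛ a ha).1 (hΛ b hb).2
  refine and_congr ?_ hchain
  cases Λ with
  | nil => simp
  | cons a Λ => simp [admissible_cons_iff (hΛ a List.mem_cons_self).2]

lemma head?_eq_of_isChain_conservativeStep {L : List V} {P : List (List V)}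
    (hchain : (L :: P).IsChain (ConservativeStep C S)) (hL : L.head? = some x)
    (hP : ∀ M ∈ L :: P,
      M.Nodup ∧ 2 ≤ M.length ∧ vdistSets C {x} S ≤ vdistSets C M.toFinset S) :
    ∀ M ∈ L :: P, M.head? = some x := by
  induction P generalizing L with
  | nil => simpa using hL
  | cons M P ih =>
    obtain _ | ⟨w, l⟩ := L
    · simp at hL
    obtain ⟨hLM, hchain⟩ := List.isChain_cons_cons.1 hchain
    obtain rfl : w = x := by simpa using hL
    have hl : l ≠ [] := by
      rintro rfl
      simpa using (hP _ List.mem_cons_self).2.1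
    have hM := hLM.head?_eq (hP _ List.mem_cons_self).1 hl (hP M (by simp)).1 (hP M (by simp)).2.2
    exact List.forall_mem_cons.2 ⟨hL, ih hchain hM fun N hN => hP N (List.mem_cons_of_mem _ hN)⟩

lemma exists_eq_map_cons_of_isChain_conservativeStep {l : List V} {Q : List (List V)}
    (hchain : ((x :: l) :: Q).IsChain (ConservativeStep C S))
    (hQ : ∀ L ∈ (x :: l) :: Q,
      L.Nodup ∧ 2 ≤ L.length ∧ vdistSets C {x} S ≤ vdistSets C L.toFinset S) :
    ∃ P : List (List V), (x :: l) :: Q = P.map (x :: ·) ∧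
      ∀ a ∈ P, a ≠ [] ∧ vdistSets C (x :: a).toFinset S = vdistSets C {x} S := by
  have hheads := head?_eq_of_isChain_conservativeStep hchain rfl hQ
  refine ⟨((x :: l) :: Q).map List.tail, (List.map_cons_tail_eq hheads).symm, ?_⟩
  simp only [List.mem_map]
  rintro _ ⟨L, hL, rfl⟩
  rw [List.cons_head?_tail (hheads L hL)]
  refine ⟨List.ne_nil_of_length_pos (by rw [List.length_tail]; have := (hQ L hL).2.1; omega),
    le_antisymm (vdistSets_le_singleton ?_) (hQ L hL).2.2⟩
  exact List.mem_toFinset.2 (List.mem_of_mem_head? (hheads L hL))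

lemma cons_toFinset_sdiff (hxa : x ∉ a) (hxM : x ∈ M.toFinset)
    (hb : b.toFinset = M.toFinset.erase x) :
    (x :: a).toFinset \ M.toFinset = a.toFinset \ b.toFinset := by
  rw [List.toFinset_cons, Finset.insert_sdiff_of_mem _ hxM, hb]
  ext w
  by_cases hw : w = x <;> simp_all

lemma distVector_lex_of_vdistSets_lt {z : V} {t l : List V} (hadm : Admissible C (z :: t) S)
    (hlt : vdistSets C (z :: t).toFinset S < vdistSets C {x} S) :
    List.Lex (· < ·) (distVector C (z :: t) S) (distVector C (x :: l) S) :=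
  List.Lex.rel (hadm.vdistSets_head ▸ hlt)

lemma MonotonePath.append_singleton {P : List (List V)} {lam m : List V}
    (h : MonotonePath C S P) (hlam : P.getLast? = some lam) (hlamne : lam ≠ [])
    (hlamS : lam.toFinset ∩ S = ∅) (hm : Admissible C m S) (hmS : (m.toFinset ∩ S).Nonempty) :
    MonotonePath C S (P ++ [m]) := by
  refine List.IsChain.append h (List.isChain_singleton m) fun a ha b hb => ?_
  obtain rfl : a = lam := Option.some_inj.1 (hlam ▸ ha).symm
  obtain rfl : b = m := (Option.mem_some_iff.1 hb).symm
  obtain _ | ⟨w, s⟩ := a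
  · exact absurd rfl hlamne
  obtain _ | ⟨z, t⟩ := b
  · simp at hmS
  refine distVector_lex_of_vdistSets_lt hm ?_
  rw [vdistSets_eq_zero_iff.2 hmS, pos_iff_ne_zero, Ne, vdistSets_singleton_eq_zero_iff]
  exact fun hwS =>
    Finset.eq_empty_iff_forall_notMem.1 hlamS w (Finset.mem_inter.2 ⟨by simp, hwS⟩)

end Path

/-! ### Combinatorial segments are monotone and conservative -/

section Forward

variable [DecidableEq V] {C : Finset (Finset V)} {S : Finset V} {x : V} {Λ₀ Δ : List (List V)}
  {M : List V}

def IsMonoConsOrdering (C : Finset (Finset V)) (S : Finset V) (Γ : List (Finset V))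
    (Γ' : List (List V)) : Prop :=
  Γ'.map List.toFinset = Γ ∧ (∀ L ∈ Γ', L.Nodup) ∧ MonotonePath C S Γ' ∧
    ConservativePath C S Γ'

lemma monotonePath_lift_append (hΛ : MonotonePath (link C x) (targetSet C x S) Λ₀)
    (hΔ : MonotonePath C S (M :: Δ)) (hM : Admissible C M S)
    (hlt : vdistSets C M.toFinset S < vdistSets C {x} S) :
    MonotonePath C S (Λ₀.map (x :: ·) ++ M :: Δ) := by
  refine List.IsChain.append (monotonePath_map_cons_iff.2 hΛ) hΔ ?_
  intro L hL M' hM'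
  rw [List.getLast?_map, Option.mem_map] at hL
  obtain ⟨a, -, rfl⟩ := hL
  rw [List.head?_cons, Option.mem_some_iff] at hM'
  subst hM'
  obtain _ | ⟨z, t⟩ := M
  · simp [vdistSets_eq_inf] at hlt
  · exact distVector_lex_of_vdistSets_lt hM hlt

lemma conservativePath_lift_append {lam : List V}
    (hins : ∀ a ∈ Λ₀, x ∉ a ∧ vdistSets C {x} S = vdistSets C (x :: a).toFinset S)
    (hΛ : ConservativePath (link C x) (targetSet C x S) (Λ₀ ++ [lam]))
    (hΔ : ConservativePath C S (M :: Δ)) (hxM : x ∈ M.toFinset)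
    (hlam : lam.toFinset = M.toFinset.erase x)
    (hlt : vdistSets C M.toFinset S < vdistSets C {x} S) :
    ConservativePath C S (Λ₀.map (x :: ·) ++ M :: Δ) := by
  obtain rfl | hne := eq_or_ne Λ₀ []
  · exact hΔ
  have hlift := (conservativePath_map_cons_iff hins).2 hΛ.left_of_append
  refine ⟨fun L hL => hlift.1 L ?_, List.IsChain.append hlift.2 hΔ.2 ?_⟩
  · rwa [List.head?_append_of_ne_nil _ (by simpa using hne)] at hL
  intro L hL M' hM'
  rw [List.getLast?_map, Option.mem_map] at hL
  obtain ⟨a, ha, rfl⟩ := hL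
  rw [List.head?_cons, Option.mem_some_iff] at hM'
  subst hM'
  have hstep : ConservativeStep (link C x) (targetSet C x S) a lam :=
    (List.isChain_append.1 hΛ.2).2.2 a ha lam rfl
  obtain ⟨⟨r, hr, hrd⟩, -⟩ := hstep
  refine conservativeStep_of_vdistSets_lt ⟨r, ?_, ?_⟩ (hΔ.admissible M List.mem_cons_self) hlt
  · rw [List.getLast?_cons, hr]
    rfl
  · rw [cons_toFinset_sdiff (hins a (List.mem_of_getLast? ha)).1 hxM hlam, hrd]

lemma IsMonoConsOrdering.lift_append {P Γ₂ : List (Finset V)} {Fk : Finset V} {lam : List V}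
    (hP : ∀ F ∈ P, x ∈ F ∧ vdistSets C F S = vdistSets C {x} S)
    (hΛ : IsMonoConsOrdering (link C x) (targetSet C x S) ((P ++ [Fk]).map (·.erase x))
      (Λ₀ ++ [lam]))
    (hΔ : IsMonoConsOrdering C S (Fk :: Γ₂) Δ) (hxFk : x ∈ Fk)
    (hFk : vdistSets C Fk S < vdistSets C {x} S) :
    IsMonoConsOrdering C S (P ++ Fk :: Γ₂) (Λ₀.map (x :: ·) ++ Δ) := by
  obtain ⟨hmap, hnd, hmono, hcons⟩ := hΛ
  rw [List.map_append, List.map_append] at hmap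
  obtain ⟨hmap₀, hlam⟩ := List.append_inj' hmap rfl
  obtain ⟨hΔmap, hΔnd, hΔmono, hΔcons⟩ := hΔ
  obtain ⟨M, Δ, rfl, rfl, rfl⟩ := List.map_eq_cons_iff.1 hΔmap
  have hins : ∀ a ∈ Λ₀, x ∉ a ∧ vdistSets C {x} S = vdistSets C (x :: a).toFinset S := by
    intro a ha
    obtain ⟨F, hF, hFa⟩ := List.mem_map.1 (hmap₀ ▸ List.mem_map_of_mem ha)
    refine ⟨fun hxa => by simpa [← hFa] using List.mem_toFinset.2 hxa, ?_⟩
    rw [List.toFinset_cons, ← hFa, Finset.insert_erase (hP F hF).1, (hP F hF).2]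
  refine ⟨?_, ?_, monotonePath_lift_append (List.IsChain.left_of_append hmono) hΔmono
      (hΔcons.admissible M List.mem_cons_self) hFk,
    conservativePath_lift_append hins hcons hΔcons hxFk (List.singleton_inj.1 hlam) hFk⟩
  · rw [List.map_append, List.map_map, List.map_cons]
    congr 1
    calc Λ₀.map (List.toFinset ∘ (x :: ·)) = (Λ₀.map List.toFinset).map (insert x) := by
          simp [Function.comp_def]
      _ = P := by
          rw [hmap₀, List.map_map]
          exact (List.map_congr_left fun F hF => Finset.insert_erase (hP F hF).1).trans
            (List.map_id _)
  · simp only [List.mem_append, List.mem_map]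
    rintro L (⟨a, ha, rfl⟩ | hL)
    · exact List.nodup_cons.2 ⟨(hins a ha).1, hnd a (List.mem_append_left _ ha)⟩
    · exact hΔnd L hL

lemma CombSeg.head_mem {Γ : List (Finset V)} {x₀ : V} (h : CombSeg C Γ S x₀) :
    ∀ F ∈ Γ.head?, F ∈ C := by
  cases h with
  | intersects _ _ _ _ hF => simpa using hF
  | dimOne _ _ _ _ _ h₁ => simpa using h₁
  | step _ _ _ _ _ _ _ _ _ _ _ hmem => simpa using hmem _ List.mem_cons_self

theorem CombSeg.exists_isMonoConsOrdering {Γ : List (Finset V)} {x₀ : V}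
    (h : CombSeg C Γ S x₀) : ∃ Γ', IsMonoConsOrdering C S Γ Γ' := by
  induction h with
  | intersects C F S _ _ _ _ =>
    obtain ⟨l, hnd, hl, hadm⟩ := exists_admissible F C S
    exact ⟨[l], by simp [hl], by simp [hnd], List.isChain_singleton l, by simpa using hadm,
      List.isChain_singleton l⟩
  | dimOne C S x₀ v _ _ _ hx hv =>
    have hlt : vdistSets C [v].toFinset S < vdistSets C {x₀} S := by
      rw [show [v].toFinset = {v} by simp, vdistSets_singleton_eq_zero_iff.2 hv, pos_iff_ne_zero]
      exact mt vdistSets_singleton_eq_zero_iff.1 hx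
    have hstep : ConservativeStep C S [x₀] [v] := by
      refine conservativeStep_of_vdistSets_lt ⟨x₀, rfl, ?_⟩ (admissible_singleton v) hlt
      simpa using fun h : x₀ = v => hx (h ▸ hv)
    exact ⟨[[x₀], [v]], by simp, by simp, List.isChain_pair.2
      (distVector_lex_of_vdistSets_lt (admissible_singleton v) hlt),
      by simpa using admissible_singleton x₀, List.isChain_pair.2 hstep⟩
  | step C F₀ Γ₁ Γ₂ Fk S x₀ y _ ℓ _ _ hdisj hℓ hbefore hafter hy hyd _ hx₀ hx₀k _ htail
      ihlink ihtail =>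
    have hx₀F₀ : x₀ ∈ F₀ := hx₀ F₀ List.mem_cons_self
    have hx₀S : x₀ ∉ S := fun hxS => by
      simpa [hdisj F₀ List.mem_cons_self] using Finset.mem_inter.2 ⟨hx₀F₀, hxS⟩
    have hvx : vdistSets C {x₀} S = ℓ := le_antisymm
      (hyd ▸ vdistSets_singleton_le_add_one (htail.head_mem Fk rfl) hx₀k hy)
      (hℓ ▸ vdistSets_le_singleton hx₀F₀)
    have hP : ∀ F ∈ F₀ :: Γ₁, x₀ ∈ F ∧ vdistSets C F S = vdistSets C {x₀} S := fun F hF =>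
      ⟨hx₀ F hF, le_antisymm (vdistSets_le_singleton (hx₀ F hF))
        (hvx ▸ not_lt.1 (hbefore F hF))⟩
    rw [← targetSet_eq_filter hx₀S hvx] at ihlink
    obtain ⟨Λ, hΛ⟩ := ihlink
    have hΛne : Λ ≠ [] := by
      rintro rfl
      simpa using hΛ.1
    rw [← List.dropLast_append_getLast hΛne] at hΛ
    obtain ⟨Δ, hΔ⟩ := ihtail
    exact ⟨_, hΛ.lift_append hP hΔ hx₀k (hvx ▸ hafter)⟩

end Forward

/-! ### Monotone conservative paths are combinatorial segments -/

section Backward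

variable [DecidableEq V] {C : Finset (Finset V)} {S : Finset V} {x y z : V}

def MeetsOnlyAtLast (S : Finset V) (Γ : List (Finset V)) : Prop :=
  (∀ F ∈ Γ.dropLast, F ∩ S = ∅) ∧ ∀ F ∈ Γ.getLast?, (F ∩ S).Nonempty

lemma meetsOnlyAtLast_append_singleton {P : List (Finset V)} {F : Finset V} :
    MeetsOnlyAtLast S (P ++ [F]) ↔ (∀ G ∈ P, G ∩ S = ∅) ∧ (F ∩ S).Nonempty := by
  simp [MeetsOnlyAtLast]

lemma MeetsOnlyAtLast.getLast {Γ : List (Finset V)} (h : MeetsOnlyAtLast S Γ) (hΓ : Γ ≠ []) :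
    (Γ.getLast hΓ ∩ S).Nonempty :=
  h.2 _ (List.getLast?_eq_some_getLast hΓ)

lemma MeetsOnlyAtLast.of_append {P Q : List (Finset V)} (h : MeetsOnlyAtLast S (P ++ Q))
    (hQ : Q ≠ []) : MeetsOnlyAtLast S Q :=
  ⟨fun F hF => h.1 F
    (by rw [List.dropLast_append_of_ne_nil hQ]; exact List.mem_append_right _ hF),
    fun F hF => h.2 F (by rwa [List.getLast?_append_of_ne_nil _ hQ])⟩

lemma MeetsOnlyAtLast.inter_eq_empty_of_append {P Q : List (Finset V)}
    (h : MeetsOnlyAtLast S (P ++ Q)) (hQ : Q ≠ []) : ∀ F ∈ P, F ∩ S = ∅ :=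
  fun F hF => h.1 F (by rw [List.dropLast_append_of_ne_nil hQ]; exact List.mem_append_left _ hF)

lemma IsDualPath.left_of_append {A B : List (Finset V)} (h : IsDualPath C (A ++ B)) :
    IsDualPath C A :=
  ⟨fun F hF => h.1 F (List.mem_append_left _ hF), List.IsChain.left_of_append h.2⟩

lemma IsDualPath.right_of_append {A B : List (Finset V)} (h : IsDualPath C (A ++ B)) :
    IsDualPath C B :=
  ⟨fun F hF => h.1 F (List.mem_append_right _ hF), List.IsChain.right_of_append h.2⟩

lemma IsDualPath.link {Γ : List (Finset V)} (h : IsDualPath C Γ) (hx : ∀ F ∈ Γ, x ∈ F) :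
    IsDualPath (link C x) (Γ.map (·.erase x)) :=
  ⟨List.forall_mem_map.2 fun F hF => erase_mem_link (h.1 F hF) (hx F hF),
    (List.isChain_map _).2
      (h.2.imp_of_mem_imp fun F G hF hG hFG => hFG.erase (hx F hF) (hx G hG))⟩

lemma IsMonoConsOrdering.right_of_append {Γ : List (Finset V)} {A B : List (List V)}
    (h : IsMonoConsOrdering C S Γ (A ++ B)) : IsMonoConsOrdering C S (B.map List.toFinset) B :=
  ⟨rfl, fun L hL => h.2.1 L (List.mem_append_right _ hL), List.IsChain.right_of_append h.2.2.1,
    fun L hL => h.2.2.2.admissible L (List.mem_append_right _ (List.mem_of_mem_head? hL)),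
    List.IsChain.right_of_append h.2.2.2.2⟩

lemma IsMonoConsOrdering.length_eq {d : ℕ} {Γ : List (Finset V)} {Γ' : List (List V)}
    (hpure : Pure C d) (hΓ : IsDualPath C Γ) (hord : IsMonoConsOrdering C S Γ Γ') :
    ∀ L ∈ Γ', L.length = d := fun L hL => by
  rw [← List.toFinset_card_of_nodup (hord.2.1 L hL)]
  exact hpure _ (hΓ.1 _ (hord.1 ▸ List.mem_map_of_mem hL))

lemma AdjFacets.eq_of_vdistSets_add_one_eq {F G : Finset V} (hadj : AdjFacets F G)
    (hfin : vdistSets C F S ≠ ⊤) (hy : y ∈ G) (hz : z ∈ G)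
    (hyd : vdistSets C {y} S + 1 = vdistSets C F S)
    (hzd : vdistSets C {z} S + 1 = vdistSets C F S) : z = y := by
  have hnotF : ∀ w, vdistSets C {w} S + 1 = vdistSets C F S → w ∉ F :=
    fun w hw hwF => vdistSets_singleton_add_one_ne hwF hfin hw
  exact Finset.card_le_one.1 hadj.symm.card_sdiff.le z
    (Finset.mem_sdiff.2 ⟨hz, hnotF z hzd⟩) y (Finset.mem_sdiff.2 ⟨hy, hnotF y hyd⟩)

lemma conservativePath_link_append {P R : List (List V)} {M m lam : List V}
    (hins : ∀ a ∈ P, x ∉ a ∧ vdistSets C {x} S = vdistSets C (x :: a).toFinset S)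
    (hcons : ConservativePath C S (P.map (x :: ·) ++ M :: R)) (hPne : P ≠ [])
    (hlam : P.getLast? = some lam) (hlamne : lam ≠ []) (hxM : x ∈ M.toFinset)
    (hm : m.toFinset = M.toFinset.erase x) (hmadm : Admissible (link C x) m (targetSet C x S))
    (hmmax : ∀ m', m'.Perm m → Admissible (link C x) m' (targetSet C x S) →
      stepIndex lam m' ≤ stepIndex lam m) :
    ConservativePath (link C x) (targetSet C x S) (P ++ [m]) := by
  obtain ⟨⟨r, hr, hrd⟩, -⟩ : ConservativeStep C S (x :: lam) M :=
    (List.isChain_append.1 hcons.2).2.2 _ (by simp [List.getLast?_map, hlam]) M rfl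
  refine ((conservativePath_map_cons_iff hins).1 hcons.left_of_append).append_singleton hPne
    fun a ha => ?_
  obtain rfl : a = lam := Option.some_inj.1 (hlam ▸ ha).symm
  refine ⟨⟨r, ?_, ?_⟩, hmadm, hmmax⟩
  · rwa [List.getLast?_cons_of_ne_nil hlamne] at hr
  · rwa [← cons_toFinset_sdiff (hins a (List.mem_of_getLast? hlam)).1 hxM hm]

lemma exists_link_ordering {P R : List (List V)} {M : List V} {Γ : List (Finset V)}
    (hΓ : IsDualPath C Γ) (hord : IsMonoConsOrdering C S Γ (P.map (x :: ·) ++ M :: R))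
    (hPne : P ≠ [])
    (hP : ∀ a ∈ P, a ≠ [] ∧ vdistSets C (x :: a).toFinset S = vdistSets C {x} S)
    (hx : x ∉ S) (hxM : x ∈ M.toFinset) (hyM : y ∈ M.toFinset)
    (hlt : vdistSets C M.toFinset S < vdistSets C {x} S)
    (hyd : vdistSets C {y} S + 1 = vdistSets C {x} S) :
    ∃ m, IsDualPath (link C x) (((P.map (x :: ·) ++ [M]).map List.toFinset).map (·.erase x)) ∧
      MeetsOnlyAtLast (targetSet C x S)
        (((P.map (x :: ·) ++ [M]).map List.toFinset).map (·.erase x)) ∧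
      IsMonoConsOrdering (link C x) (targetSet C x S)
        (((P.map (x :: ·) ++ [M]).map List.toFinset).map (·.erase x)) (P ++ [m]) := by
  obtain ⟨rfl, hnd, hmono, hcons⟩ := hord
  have hfin := vdistSets_ne_top_of_add_one_eq (hΓ.1 _ (by simp)) hyM hlt hyd
  have hins : ∀ a ∈ P, x ∉ a ∧ a.Nodup := fun a ha =>
    List.nodup_cons.1 (hnd _ (List.mem_append_left _ (List.mem_map_of_mem ha)))
  have hdisj : ∀ a ∈ P, a.toFinset ∩ targetSet C x S = ∅ := fun a ha => by
    simpa [Finset.erase_insert (List.mem_toFinset.not.2 (hins a ha).1)]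
      using erase_inter_targetSet_eq_empty hx hfin (hP a ha).2
  have hyx : y ≠ x := by
    rintro rfl
    exact vdistSets_singleton_add_one_ne (Finset.mem_singleton_self y) hfin hyd
  have hyT : y ∈ M.toFinset.erase x ∩ targetSet C x S := Finset.mem_inter.2
    ⟨Finset.mem_erase.2 ⟨hyx, hyM⟩, mem_targetSet hx (hΓ.1 _ (by simp)) hxM hyM hyx hyd⟩
  have hmap : ((P.map (x :: ·) ++ [M]).map List.toFinset).map (·.erase x) =
      P.map List.toFinset ++ [M.toFinset.erase x] := by
    simp only [List.map_append, List.map_map, List.map_cons, List.map_nil]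
    refine congrArg (· ++ _) (List.map_congr_left fun a ha => ?_)
    simp [Finset.erase_insert (List.mem_toFinset.not.2 (hins a ha).1)]
  obtain ⟨lam, hlam⟩ := Option.isSome_iff_exists.1 (List.getLast?_isSome.2 hPne)
  obtain ⟨m₀, hm₀nd, hm₀, hm₀adm⟩ :=
    exists_admissible (M.toFinset.erase x) (link C x) (targetSet C x S)
  obtain ⟨m, hmperm, hmadm, hmmax⟩ := exists_perm_admissible_max_stepIndex lam m₀ hm₀adm
  have hm : m.toFinset = M.toFinset.erase x := (List.toFinset_eq_of_perm _ _ hmperm).trans hm₀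
  have hlamP : lam ∈ P := List.mem_of_getLast? hlam
  refine ⟨m, ?_, ?_, ?_, ?_, ?_, ?_⟩
  · rw [← List.singleton_append, ← List.append_assoc, List.map_append] at hΓ
    refine hΓ.left_of_append.link fun F hF => ?_
    simp only [List.map_append, List.map_map, List.mem_append, List.mem_map,
      List.mem_singleton] at hF
    rcases hF with ⟨a, -, rfl⟩ | ⟨_, rfl, rfl⟩ <;> simp [hxM]
  · rw [hmap, meetsOnlyAtLast_append_singleton]
    exact ⟨by simpa using hdisj, ⟨y, hyT⟩⟩
  · rw [hmap, List.map_append, List.map_singleton, hm]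
  · simp only [List.mem_append, List.mem_singleton]
    rintro L (hL | rfl)
    · exact (hins L hL).2
    · exact hmperm.nodup_iff.2 hm₀nd
  · exact (monotonePath_map_cons_iff.1 (List.IsChain.left_of_append hmono)).append_singleton
      hlam (hP lam hlamP).1 (hdisj lam hlamP) hmadm ⟨y, hm ▸ hyT⟩
  · exact conservativePath_link_append (fun a ha => ⟨(hins a ha).1, (hP a ha).2.symm⟩) hcons
      hPne hlam (hP lam hlamP).1 hxM hm hmadm hmmax

lemma combSeg_append_of_link (hdim : ∀ F ∈ C, 2 ≤ F.card) {P : List (List V)} {M : List V}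
    {Γ₂ : List (Finset V)} {x' : V} (hPne : P ≠ [])
    (hΓ : IsDualPath C ((P.map (x :: ·)).map List.toFinset ++ M.toFinset :: Γ₂))
    (hmeet : MeetsOnlyAtLast S ((P.map (x :: ·)).map List.toFinset ++ M.toFinset :: Γ₂))
    (hP : ∀ a ∈ P, vdistSets C (x :: a).toFinset S = vdistSets C {x} S)
    (hxM : x ∈ M.toFinset) (hyM : y ∈ M.toFinset)
    (hM : vdistSets C M.toFinset S < vdistSets C {x} S)
    (hyd : vdistSets C {y} S + 1 = vdistSets C {x} S)
    (hlink : CombSeg (link C x) (((P.map (x :: ·) ++ [M]).map List.toFinset).map (·.erase x))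
      (targetSet C x S) x')
    (htail : CombSeg C (M.toFinset :: Γ₂) S y) :
    CombSeg C ((P.map (x :: ·)).map List.toFinset ++ M.toFinset :: Γ₂) S x := by
  obtain _ | ⟨a, P⟩ := P
  · exact absurd rfl hPne
  have hF : ∀ F ∈ ((a :: P).map (x :: ·)).map List.toFinset,
      F ∈ C ∧ F ∩ S = ∅ ∧ x ∈ F ∧ vdistSets C F S = vdistSets C {x} S := fun F hF => by
    refine ⟨hΓ.1 F (List.mem_append_left _ hF),
      hmeet.inter_eq_empty_of_append (by simp) F hF, ?_⟩
    obtain ⟨b, hb, rfl⟩ : ∃ b ∈ a :: P, (x :: b).toFinset = F := by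
      simpa only [List.map_map, List.mem_map, Function.comp_apply] using hF
    exact ⟨by simp, hP b hb⟩
  have hx : x ∉ S := fun hxS => Finset.eq_empty_iff_forall_notMem.1
    (hF _ List.mem_cons_self).2.1 x (Finset.mem_inter.2 ⟨by simp, hxS⟩)
  have hfin := vdistSets_ne_top_of_add_one_eq (htail.head_mem _ rfl) hyM hM hyd
  have hFl := (hF _ (List.getLast_mem (List.cons_ne_nil _ _))).2.2.2
  have hadj := hΓ.2.rel_getLast_head_of_append (List.cons_ne_nil _ _) (List.cons_ne_nil _ _)
  rw [List.map_append, targetSet_eq_filter hx rfl] at hlink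
  exact CombSeg.step C _ _ Γ₂ _ S x y x' _ hdim (fun F hF' => (hF F hF').1)
    (fun F hF' => (hF F hF').2.1) (hF _ List.mem_cons_self).2.2.2
    (fun F hF' => (hF F hF').2.2.2 ▸ lt_irrefl _) hM hyM hyd
    (fun w hw hwd => hadj.eq_of_vdistSets_add_one_eq (hFl ▸ hfin) hyM hw (hyd.trans hFl.symm)
      (hwd.trans hFl.symm))
    (fun F hF' => (hF F hF').2.2.1) hxM hlink htail

lemma combSeg_of_pure_one {Γ : List (Finset V)} {l : List V} {rest : List (List V)}
    (hpure : Pure C 1) (hΓ : IsDualPath C Γ) (hmeet : MeetsOnlyAtLast S Γ)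
    (hord : IsMonoConsOrdering C S Γ ((x :: l) :: rest)) (hrest : rest ≠ []) :
    CombSeg C Γ S x := by
  have hlen := hord.length_eq hpure hΓ
  obtain ⟨rfl, -, hmono, -⟩ := hord
  obtain _ | ⟨L, rest⟩ := rest
  · exact absurd rfl hrest
  obtain rfl : l = [] := by simpa using hlen _ List.mem_cons_self
  obtain ⟨v, rfl⟩ : ∃ v, L = [v] := List.length_eq_one_iff.1 (hlen L (by simp))
  have hS : S.Nonempty := (hmeet.getLast (by simp)).mono Finset.inter_subset_right
  have hlt : vdistSets C {v} S < vdistSets C {x} S :=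
    (List.lex_singleton_iff _ _).1 (List.isChain_cons_cons.1 hmono).1
  have hdeg : C.sup Finset.card ≤ 1 := Finset.sup_le fun F hF => (hpure F hF).le
  have hv : v ∈ S := vdistSets_singleton_eq_zero_iff.1
    (Order.lt_one_iff.1 (hlt.trans_le (vdistSets_singleton_le_one hdeg hS)))
  obtain rfl : rest = [] := by
    obtain _ | ⟨L, rest⟩ := rest
    · rfl
    · have := hmeet.1 {v} (by simp)
      simp [Finset.singleton_inter_of_mem hv] at this
  have hx : x ∉ S := fun hx => by
    simpa [Finset.singleton_inter_of_mem hx] using hmeet.1 {x} (by simp)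
  simpa using CombSeg.dimOne C S x v hpure (by simpa using hΓ.1 _ List.mem_cons_self)
    (by simpa using hΓ.1 [v].toFinset (by simp)) hx hv

lemma exists_descent_decomposition {d : ℕ} (hpure : Pure C d) (hd : 2 ≤ d)
    {Γ : List (Finset V)} {l : List V} {rest : List (List V)}
    (hΓ : IsDualPath C Γ) (hmeet : MeetsOnlyAtLast S Γ)
    (hord : IsMonoConsOrdering C S Γ ((x :: l) :: rest)) (hF₀ : (x :: l).toFinset ∩ S = ∅) :
    ∃ (P : List (List V)) (y : V) (m : List V) (R : List (List V)),
      (x :: l) :: rest = P.map (x :: ·) ++ (y :: m) :: R ∧ P.head? = some l ∧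
      (∀ a ∈ P, a ≠ [] ∧ vdistSets C (x :: a).toFinset S = vdistSets C {x} S) ∧
      vdistSets C (y :: m).toFinset S < vdistSets C {x} S ∧
      x ∈ (y :: m).toFinset ∧ vdistSets C {y} S + 1 = vdistSets C {x} S := by
  have hlen := hord.length_eq hpure hΓ
  obtain ⟨rfl, hnd, -, hcons⟩ := hord
  have hℓ : vdistSets C (x :: l).toFinset S = vdistSets C {x} S :=
    (hcons.admissible _ List.mem_cons_self).vdistSets_head.symm
  have hend : ∃ L ∈ (x :: l) :: rest, ¬ ¬ vdistSets C L.toFinset S < vdistSets C {x} S := by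
    refine ⟨_, List.getLast_mem (List.cons_ne_nil _ _), not_not.2 ?_⟩
    have := hmeet.getLast (by simp)
    rw [List.getLast_map] at this
    rw [vdistSets_eq_zero_iff.2 this, ← hℓ, pos_iff_ne_zero, Ne, vdistSets_eq_zero_iff, hF₀]
    exact Finset.not_nonempty_empty
  obtain ⟨_ | ⟨L, Q⟩, M, R, hsplit, hQ, hM⟩ := List.exists_eq_append_cons_of_exists_not hend
  · obtain ⟨rfl, -⟩ := List.cons_eq_cons.1 hsplit
    exact absurd (hℓ ▸ not_not.1 hM) (lt_irrefl _)
  obtain ⟨rfl, rfl⟩ := List.cons_eq_cons.1 hsplit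
  obtain ⟨P, hPeq, hP⟩ := exists_eq_map_cons_of_isChain_conservativeStep
    (List.IsChain.left_of_append (l₂ := M :: R) hcons.2) fun L hL =>
      ⟨hnd L (List.mem_append_left _ hL), (hlen L (List.mem_append_left _ hL)).symm ▸ hd,
        not_lt.1 (hQ L hL)⟩
  obtain ⟨a, P', rfl, ha, -⟩ := List.map_eq_cons_iff.1 hPeq.symm
  obtain rfl : l = a := (List.cons_eq_cons.1 ha).2.symm
  obtain _ | ⟨y, m⟩ := M
  · have := hlen [] (by simp)
    simp only [List.length_nil] at this
    omega
  have hnd' : ∀ L ∈ ((x :: l) :: Q) ++ (y :: m) :: R, L.Nodup := hnd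
  have hchain : (((x :: l) :: Q) ++ (y :: m) :: R).IsChain (ConservativeStep C S) := hcons.2
  rw [hPeq] at hnd' hchain
  obtain ⟨lam, hlam⟩ :=
    Option.isSome_iff_exists.1 (List.getLast?_isSome.2 (List.cons_ne_nil l P'))
  have hlamP : lam ∈ l :: P' := List.mem_of_getLast? hlam
  have hstep : ConservativeStep C S (x :: lam) (y :: m) :=
    (List.isChain_append.1 hchain).2.2 _ (by rw [List.getLast?_map, hlam]; rfl) _ rfl
  obtain ⟨hxM, hyd⟩ := hstep.vdistSets_add_one
    (hnd' _ (List.mem_append_left _ (List.mem_map_of_mem hlamP))) (hP lam hlamP).1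
    (hΓ.1 _ (List.mem_map_of_mem (by simp))) (not_not.1 hM)
  exact ⟨l :: P', y, m, R, by rw [← hPeq]; rfl, rfl, hP, not_not.1 hM, hxM, hyd⟩

theorem combSeg_of_isMonoConsOrdering {d : ℕ} (hpure : Pure C d) {Γ : List (Finset V)}
    {Γ' : List (List V)} (hΓ : IsDualPath C Γ) (hmeet : MeetsOnlyAtLast S Γ)
    (hord : IsMonoConsOrdering C S Γ Γ') {l : List V}
    (hhead : Γ'.head? = some (x :: l)) : CombSeg C Γ S x := by
  -- the path in the link is at most as long as `Γ` but one dimension lower; the tail is shorter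
  induction hn : d + Γ.length using Nat.strong_induction_on
    generalizing d C S Γ Γ' x l with
  | _ n ih =>
  obtain _ | ⟨L, rest⟩ := Γ'
  · simp at hhead
  obtain rfl : L = x :: l := by simpa using hhead
  obtain ⟨rfl, -⟩ := id hord
  have hF₀ : (x :: l).toFinset ∈ C := hΓ.1 _ List.mem_cons_self
  obtain rfl | hrest := eq_or_ne rest []
  · exact CombSeg.intersects C _ S x hF₀ (by simp) (hmeet.2 _ rfl)
  have hF₀S : (x :: l).toFinset ∩ S = ∅ := hmeet.1 _ (by
    obtain _ | ⟨L, rest⟩ := rest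
    · exact absurd rfl hrest
    · simp)
  rcases lt_or_ge d 2 with hd | hd
  · obtain rfl : d = 1 := by
      have := hpure _ hF₀ ▸ Finset.card_pos.2 ⟨x, by simp⟩
      omega
    exact combSeg_of_pure_one hpure hΓ hmeet hord hrest
  have hx : x ∉ S := fun hxS =>
    Finset.eq_empty_iff_forall_notMem.1 hF₀S x (Finset.mem_inter.2 ⟨by simp, hxS⟩)
  obtain ⟨P, y, m, R, hsplit, hl, hP, hM, hxM, hyd⟩ :=
    exists_descent_decomposition hpure hd hΓ hmeet hord hF₀S
  have hPne : P ≠ [] := by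
    rintro rfl
    simp at hl
  rw [hsplit] at hΓ hmeet hord hn ⊢
  obtain ⟨Λ, hdual', hmeet', hord'⟩ :=
    exists_link_ordering hΓ hord hPne hP hx hxM (by simp) hM hyd
  obtain ⟨a, l', rfl⟩ := List.exists_cons_of_ne_nil (hP l (List.mem_of_mem_head? hl)).1
  have hlink := ih _ (by simp at hn ⊢; omega) (hpure.link x) hdual' hmeet' hord'
    (by rw [List.head?_append_of_ne_nil _ hPne, hl]) rfl
  rw [List.map_append, List.map_cons] at hΓ hmeet ⊢
  have htail := ih _ (by simp at hn ⊢; have := List.length_pos_of_ne_nil hPne; omega) hpure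
    hΓ.right_of_append (hmeet.of_append (by simp)) hord.right_of_append rfl rfl
  exact combSeg_append_of_link (fun F hF => (hpure F hF).symm ▸ hd) hPne hΓ hmeet
    (fun a ha => (hP a ha).2) hxM (by simp) hM hyd hlink htail

end Backward

end MCP

open MCP in
theorem statement4_general {V : Type} [DecidableEq V] (d : ℕ)
    (C : Finset (Finset V)) (hpure : Pure C d)
    (S : Finset V)
    (Γ : List (Finset V)) (hne : Γ ≠ []) (hdual : IsDualPath C Γ)
    (hlast : ∀ F ∈ Γ.getLast?, (F ∩ S).Nonempty)
    (hothers : ∀ i : ℕ, i + 1 < Γ.length → ∀ F ∈ Γ[i]?, F ∩ S = ∅) :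
    (∃ x₀ F₀, Γ.head? = some F₀ ∧ x₀ ∈ F₀ ∧ CombSeg C Γ S x₀) ↔
    (∃ Γ' : List (List V), Γ'.map List.toFinset = Γ ∧ (∀ L ∈ Γ', L.Nodup) ∧
      MonotonePath C S Γ' ∧ ConservativePath C S Γ') := by
  have hmeet : MeetsOnlyAtLast S Γ := by
    refine ⟨fun F hF => ?_, hlast⟩
    obtain ⟨i, hi⟩ := List.mem_iff_getElem?.1 hF
    rw [List.getElem?_dropLast] at hi
    split_ifs at hi with h
    · exact hothers i (by omega) F hi
  refine ⟨fun ⟨_, _, _, _, hseg⟩ => hseg.exists_isMonoConsOrdering, fun ⟨Γ', hord⟩ => ?_⟩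
  obtain ⟨L, hL⟩ : ∃ L, Γ'.head? = some L := by
    obtain _ | ⟨L, Γ'⟩ := Γ'
    · exact absurd hord.1.symm hne
    · exact ⟨L, rfl⟩
  obtain ⟨x₀, l, rfl⟩ : ∃ x₀ l, L = x₀ :: l := by
    obtain _ | ⟨x₀, l⟩ := L
    · have hlastpos := Finset.card_pos.2 ((hmeet.getLast hne).mono Finset.inter_subset_left)
      rw [hpure _ (hdual.1 _ (List.getLast_mem hne)),
        ← hpure _ (hdual.1 _ (hord.1 ▸ List.mem_map_of_mem (List.mem_of_mem_head? hL)))] at hlastpos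
      simp at hlastpos
    · exact ⟨x₀, l, rfl⟩
  exact ⟨x₀, _, by rw [← hord.1, List.head?_map, hL]; rfl, by simp,
    combSeg_of_isMonoConsOrdering hpure hdual hmeet hord hL⟩

open MCP in
/-- equivalence of combinatorial segments and monotone conservative
paths: a dual path whose last facet is the only one meeting `S` is a combinatorial
segment from its first facet to `S` (for some anchor in that facet) iff its facets can
be ordered so as to form a monotone conservative path towards `S`. -/
theorem statement4 {V : Type} [DecidableEq V] [Fintype V] (d : ℕ)
    (C : Finset (Finset V)) (hpure : Pure C d) (hnormal : Normal C)
    (S : Finset V) (hS : S.Nonempty) (hSv : S ⊆ verts C)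
    (Γ : List (Finset V)) (hne : Γ ≠ []) (hdual : IsDualPath C Γ)
    (hlast : ∀ F ∈ Γ.getLast?, (F ∩ S).Nonempty)
    (hothers : ∀ i : ℕ, i + 1 < Γ.length → ∀ F ∈ Γ[i]?, F ∩ S = ∅) :
    (∃ x₀ F₀, Γ.head? = some F₀ ∧ x₀ ∈ F₀ ∧ CombSeg C Γ S x₀) ↔
    (∃ Γ' : List (List V), Γ'.map List.toFinset = Γ ∧ (∀ L ∈ Γ', L.Nodup) ∧
      MonotonePath C S Γ' ∧ ConservativePath C S Γ') :=
  statement4_general d C hpure S Γ hne hdual hlast hothers
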